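/- arXiv:2111.00581 — 2 statements merged into one kernel-verified Lean document; each statement's English description precedes it below -/
import Mathlib

section
/- For every c > 0, the Gamma distribution with shape parameter m and rate parameter m/c converges weakly, as m → ∞ over the natural numbers, to the Dirac point mass at c; that is, the sequence of probability measures (Gamma(m, m/c))_{m≥1} on ℝ converges in the topology of weak convergence of probability measures to δ_c. -/
/-!
The size-biasing identity `x * gammaPDFReal a r x = a / r * gammaPDFReal (a + 1) r x` gives the
first two moments of `Gamma(a, r)`, hence mean `a / r` and variance `a / r ^ 2`. For
`Gamma(m, m / c)` these are `c` and `c ^ 2 / m`, so by Chebyshev the mass outside every ball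
around `c` tends to `0`. By the open-set (liminf) form of the portmanteau theorem, such
concentration is weak convergence to the Dirac mass at `c`.
-/

open MeasureTheory Filter Topology ProbabilityTheory

open scoped BoundedContinuousFunction

theorem tendsto_integral_dirac_of_tendsto_measure_compl_ball {Ω ι : Type*}
    [PseudoMetricSpace Ω] [MeasurableSpace Ω] [OpensMeasurableSpace Ω]
    {L : Filter ι} [L.IsCountablyGenerated] {μ : ι → Measure Ω} [∀ i, IsProbabilityMeasure (μ i)]
    {c : Ω} (h : ∀ δ > 0, Tendsto (fun i ↦ μ i (Metric.ball c δ)ᶜ) L (𝓝 0)) (f : Ω →ᵇ ℝ) :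
    Tendsto (fun i ↦ ∫ x, f x ∂μ i) L (𝓝 (f c)) := by
  let ν : ι → ProbabilityMeasure Ω := fun i ↦ ⟨μ i, inferInstance⟩
  have hν : Tendsto ν L (𝓝 ⟨Measure.dirac c, inferInstance⟩) := by
    refine tendsto_of_forall_isOpen_le_liminf' fun G hG ↦ ?_
    rcases L.eq_or_neBot with rfl | _
    · simp
    by_cases hcG : c ∈ G
    · obtain ⟨δ, hδ, hball⟩ := Metric.isOpen_iff.1 hG c hcG
      have hball_one : Tendsto (fun i ↦ μ i (Metric.ball c δ)) L (𝓝 1) := by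
        have := ENNReal.Tendsto.sub tendsto_const_nhds (h δ hδ) (.inl ENNReal.one_ne_top)
        simpa [← prob_compl_eq_one_sub Metric.isOpen_ball.measurableSet.compl] using this
      calc Measure.dirac c G = 1 := Measure.dirac_apply_of_mem hcG
        _ = L.liminf (fun i ↦ μ i (Metric.ball c δ)) := hball_one.liminf_eq.symm
        _ ≤ L.liminf (fun i ↦ μ i G) :=
          liminf_le_liminf (Eventually.of_forall fun i ↦ measure_mono hball)
    · simp [Measure.dirac_apply' c hG.measurableSet, hcG]
  simpa [ν, integral_dirac' _ _ f.continuous.stronglyMeasurable] using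
    ProbabilityMeasure.tendsto_iff_forall_integral_tendsto.1 hν f

namespace ProbabilityTheory

variable {a r : ℝ}

lemma integral_gammaMeasure (ha : 0 < a) (hr : 0 < r) (g : ℝ → ℝ) :
    ∫ x, g x ∂gammaMeasure a r = ∫ x, gammaPDFReal a r x * g x := by
  rw [gammaMeasure, integral_withDensity_eq_integral_toReal_smul (f := gammaPDF a r)
    (measurable_gammaPDFReal a r).ennreal_ofReal (ae_of_all _ fun _ ↦ ENNReal.ofReal_lt_top)]
  simp [gammaPDF, ENNReal.toReal_ofReal (gammaPDFReal_nonneg ha hr _)]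

lemma integrable_gammaMeasure_iff (ha : 0 < a) (hr : 0 < r) {g : ℝ → ℝ} :
    Integrable g (gammaMeasure a r) ↔ Integrable (fun x ↦ gammaPDFReal a r x * g x) := by
  rw [gammaMeasure, integrable_withDensity_iff_integrable_smul' (f := gammaPDF a r)
    (measurable_gammaPDFReal a r).ennreal_ofReal (ae_of_all _ fun _ ↦ ENNReal.ofReal_lt_top)]
  simp [gammaPDF, ENNReal.toReal_ofReal (gammaPDFReal_nonneg ha hr _)]

lemma mul_gammaPDFReal (ha : 0 < a) (hr : 0 < r) (x : ℝ) :
    x * gammaPDFReal a r x = a / r * gammaPDFReal (a + 1) r x := by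
  rcases lt_or_ge x 0 with hx | hx
  · simp [gammaPDFReal, not_le.2 hx]
  simp only [gammaPDFReal, if_pos hx, add_sub_cancel_right]
  have hxa : x ^ a = x ^ (a - 1) * x := by
    rw [← Real.rpow_add_one' hx (by simpa using ha.ne'), sub_add_cancel]
  have hΓ : Real.Gamma a ≠ 0 := (Real.Gamma_pos_of_pos ha).ne'
  rw [Real.rpow_add_one hr.ne', Real.Gamma_add_one ha.ne', hxa]
  field_simp

lemma integral_mul_gammaMeasure (ha : 0 < a) (hr : 0 < r) (g : ℝ → ℝ) :
    ∫ x, x * g x ∂gammaMeasure a r = a / r * ∫ x, g x ∂gammaMeasure (a + 1) r := by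
  simp_rw [integral_gammaMeasure ha hr, integral_gammaMeasure (by positivity : 0 < a + 1) hr,
    ← integral_const_mul, ← mul_assoc, mul_comm (gammaPDFReal a r _), mul_gammaPDFReal ha hr]

lemma integrable_id_mul_gammaMeasure (ha : 0 < a) (hr : 0 < r) {g : ℝ → ℝ}
    (hg : Integrable g (gammaMeasure (a + 1) r)) :
    Integrable (fun x ↦ x * g x) (gammaMeasure a r) := by
  rw [integrable_gammaMeasure_iff (by positivity) hr] at hg
  rw [integrable_gammaMeasure_iff ha hr]
  convert hg.const_mul (a / r) using 2 with x
  rw [← mul_assoc, mul_comm (gammaPDFReal a r x), mul_gammaPDFReal ha hr, mul_assoc]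

lemma integral_id_gammaMeasure (ha : 0 < a) (hr : 0 < r) :
    ∫ x, x ∂gammaMeasure a r = a / r := by
  have := isProbabilityMeasure_gammaMeasure (by positivity : 0 < a + 1) hr
  simpa using integral_mul_gammaMeasure ha hr (fun _ ↦ 1)

lemma integral_sq_gammaMeasure (ha : 0 < a) (hr : 0 < r) :
    ∫ x, x ^ 2 ∂gammaMeasure a r = a * (a + 1) / r ^ 2 := by
  have h := integral_mul_gammaMeasure ha hr (fun x ↦ x)
  simp only [← sq] at h
  rw [h, integral_id_gammaMeasure (by positivity) hr]
  field_simp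

lemma memLp_id_gammaMeasure (ha : 0 < a) (hr : 0 < r) : MemLp id 2 (gammaMeasure a r) := by
  have := isProbabilityMeasure_gammaMeasure (by positivity : 0 < a + 1 + 1) hr
  have h1 : Integrable (fun x : ℝ ↦ x) (gammaMeasure (a + 1) r) := by
    simpa using
      integrable_id_mul_gammaMeasure (by positivity : 0 < a + 1) hr (integrable_const 1)
  rw [memLp_two_iff_integrable_sq measurable_id.aestronglyMeasurable]
  simpa [sq] using integrable_id_mul_gammaMeasure ha hr h1

lemma variance_id_gammaMeasure (ha : 0 < a) (hr : 0 < r) :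
    variance id (gammaMeasure a r) = a / r ^ 2 := by
  have := isProbabilityMeasure_gammaMeasure ha hr
  rw [variance_eq_sub (memLp_id_gammaMeasure ha hr)]
  simp only [Pi.pow_apply, id]
  rw [integral_sq_gammaMeasure ha hr, integral_id_gammaMeasure ha hr]
  field_simp
  ring

lemma gammaMeasure_compl_ball_le (ha : 0 < a) (hr : 0 < r) {δ : ℝ} (hδ : 0 < δ) :
    gammaMeasure a r (Metric.ball (a / r) δ)ᶜ ≤ ENNReal.ofReal (a / r ^ 2 / δ ^ 2) := by
  have := isProbabilityMeasure_gammaMeasure ha hr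
  have hset : (Metric.ball (a / r) δ)ᶜ = {x | δ ≤ |id x - ∫ y, id y ∂gammaMeasure a r|} := by
    ext x
    simp [Real.dist_eq, integral_id_gammaMeasure ha hr]
  rw [hset, ← variance_id_gammaMeasure ha hr]
  exact meas_ge_le_variance_div_sq (memLp_id_gammaMeasure ha hr) hδ

lemma gammaMeasure_div_compl_ball_le {n c δ : ℝ} (hn : 0 < n) (hc : 0 < c) (hδ : 0 < δ) :
    gammaMeasure n (n / c) (Metric.ball c δ)ᶜ ≤ ENNReal.ofReal (c ^ 2 / δ ^ 2 / n) := by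
  have hmean : n / (n / c) = c := by field_simp
  have hvar : n / (n / c) ^ 2 / δ ^ 2 = c ^ 2 / δ ^ 2 / n := by field_simp
  simpa only [hmean, hvar] using gammaMeasure_compl_ball_le hn (div_pos hn hc) hδ

end ProbabilityTheory

/-- The Gamma distribution with shape `m` and rate `m / c` converges weakly, as
`m → ∞`, to the Dirac point mass at `c`: the integrals of every bounded continuous
function converge. -/
theorem stmt6 (c : ℝ) (hc : 0 < c) :
    ∀ f : BoundedContinuousFunction ℝ ℝ,
      Tendsto (fun m : ℕ => ∫ x, f x ∂(ProbabilityTheory.gammaMeasure m (m / c)))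
        atTop (𝓝 (∫ x, f x ∂(Measure.dirac c))) := by
  intro f
  -- `Real.Gamma 0 = 0` makes `gammaMeasure 0 0` the zero measure, so start at `m = 1`.
  rw [integral_dirac, ← tendsto_add_atTop_iff_nat 1]
  have hm (m : ℕ) : (0 : ℝ) < (m + 1 : ℕ) := by positivity
  have := fun m ↦ isProbabilityMeasure_gammaMeasure (hm m) (div_pos (hm m) hc)
  refine tendsto_integral_dirac_of_tendsto_measure_compl_ball (fun δ hδ ↦ ?_) f
  have hbound :
      Tendsto (fun m : ℕ ↦ ENNReal.ofReal (c ^ 2 / δ ^ 2 / (m + 1 : ℕ))) atTop (𝓝 0) := by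
    simpa using ENNReal.tendsto_ofReal
      ((tendsto_const_div_atTop_nhds_zero_nat _).comp (tendsto_add_atTop_nat 1))
  exact tendsto_of_tendsto_of_tendsto_of_le_of_le tendsto_const_nhds hbound (fun _ ↦ zero_le)
    fun m ↦ gammaMeasure_div_compl_ball_le (hm m) hc hδ
end

section
/- Let T be a p×p sub-intensity matrix all of whose eigenvalues have negative real part, π a probability vector, and θ > 0. Then for every natural number n ≥ 1, the nθ-th moment of the Weibull PH-MoE specification satisfies ∫₀^∞ nθ y^{nθ−1} · πᵀ exp(y^θ · T) e dy = Γ(n+1) · πᵀ (−T)^{−n} e; equivalently, in the homogeneous case θ = 1, ∫₀^∞ n y^{n−1} · πᵀ exp(yT) e dy = n! · πᵀ (−T)^{−n} e. -/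
open Matrix MeasureTheory Filter Topology

/-- A sub-intensity matrix: negative diagonal entries, nonnegative off-diagonal entries,
nonpositive row sums. -/
def IsSubIntensity {p : ℕ} (T : Matrix (Fin p) (Fin p) ℝ) : Prop :=
  (∀ i, T i i < 0) ∧ (∀ i j, i ≠ j → 0 ≤ T i j) ∧ (∀ i, ∑ j, T i j ≤ 0)

/-- A probability vector: nonnegative entries summing to one. -/
def IsProbVec {p : ℕ} (π : Fin p → ℝ) : Prop :=
  (∀ i, 0 ≤ π i) ∧ ∑ i, π i = 1

/-!
Write `ψ_w(u) = πᵀ exp(uT) w`. Splitting `w` into generalized eigenvectors of `T` over `ℂ`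
writes `exp(uT) w` as a sum of terms `e^{uμ} · polynomial(u)` with `Re μ < 0`, so `ψ_w` and
every `u ↦ u^m ψ_w(u)` decay exponentially. In particular `0` is not an eigenvalue, `T` is
invertible and `-ψ_{(-T)⁻¹ w}` is a primitive of `ψ_w`. Integrating by parts against this
primitive gives `∫₀^∞ u^{m+1} ψ_w = (m+1) ∫₀^∞ u^m ψ_{(-T)⁻¹ w}`, hence
`∫₀^∞ u^m ψ_w = m! πᵀ (-T)^{-(m+1)} w`. The Weibull moments follow by substituting `u = y^θ`.
-/

open Asymptotics NormedSpace
open scoped Nat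

def HasExpDecay {E : Type*} [Norm E] (f : ℝ → E) : Prop :=
  ∃ ε > 0, f =O[atTop] fun u => Real.exp (-ε * u)

lemma isBigO_exp_neg_mul_of_le {ε ε' : ℝ} (h : ε ≤ ε') :
    (fun u => Real.exp (-ε' * u)) =O[atTop] fun u => Real.exp (-ε * u) := by
  refine IsBigO.of_bound 1 ?_
  filter_upwards [eventually_ge_atTop 0] with u hu
  simp only [Real.norm_eq_abs, Real.abs_exp, one_mul, Real.exp_le_exp]
  nlinarith

section HasExpDecay

variable {E : Type*} [NormedAddCommGroup E] {f g : ℝ → E}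

lemma hasExpDecay_zero : HasExpDecay fun _ : ℝ => (0 : E) :=
  ⟨1, one_pos, isBigO_zero _ _⟩

lemma HasExpDecay.add (hf : HasExpDecay f) (hg : HasExpDecay g) : HasExpDecay (f + g) := by
  obtain ⟨ε, hε, hfε⟩ := hf
  obtain ⟨δ, hδ, hgδ⟩ := hg
  exact ⟨min ε δ, lt_min hε hδ, (hfε.trans (isBigO_exp_neg_mul_of_le (min_le_left ε δ))).add
    (hgδ.trans (isBigO_exp_neg_mul_of_le (min_le_right ε δ)))⟩

lemma hasExpDecay_sum {ι : Type*} (s : Finset ι) {F : ι → ℝ → E}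
    (hF : ∀ i ∈ s, HasExpDecay (F i)) : HasExpDecay fun u => ∑ i ∈ s, F i u := by
  classical
  induction s using Finset.induction_on with
  | empty => simpa using hasExpDecay_zero
  | insert i s hi ih =>
    simp_rw [Finset.sum_insert hi]
    exact (hF i (s.mem_insert_self i)).add (ih fun j hj => hF j (Finset.mem_insert_of_mem hj))

lemma HasExpDecay.smul_const {𝕜 : Type*} [NormedField 𝕜] [NormedSpace 𝕜 E] {c : ℝ → 𝕜}
    (hc : HasExpDecay c) (v : E) : HasExpDecay fun u => c u • v := by
  obtain ⟨ε, hε, hcε⟩ := hc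
  refine ⟨ε, hε, IsBigO.trans ?_ hcε⟩
  exact IsBigO.of_bound ‖v‖ (Eventually.of_forall fun u => by rw [norm_smul, mul_comm])

lemma HasExpDecay.pow_smul [NormedSpace ℝ E] (hf : HasExpDecay f) (m : ℕ) :
    HasExpDecay fun u => u ^ m • f u := by
  obtain ⟨ε, hε, hfε⟩ := hf
  refine ⟨ε / 2, half_pos hε, ?_⟩
  refine ((isLittleO_pow_exp_pos_mul_atTop m (half_pos hε)).isBigO.smul hfε).congr_right
    fun u => ?_
  rw [smul_eq_mul, ← Real.exp_add]
  ring_nf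

lemma HasExpDecay.dotProduct {n 𝕜 : Type*} [Fintype n] [NormedRing 𝕜] {f : ℝ → n → 𝕜}
    (hf : HasExpDecay f) (c : n → 𝕜) : HasExpDecay fun u => c ⬝ᵥ f u := by
  obtain ⟨ε, hε, hfε⟩ := hf
  exact ⟨ε, hε, IsBigO.fun_sum fun i _ => (isBigO_pi.1 hfε i).const_mul_left (c i)⟩

lemma HasExpDecay.tendsto_zero (hf : HasExpDecay f) : Tendsto f atTop (𝓝 0) := by
  obtain ⟨ε, hε, hfε⟩ := hf
  exact hfε.trans_tendsto <|
    Real.tendsto_exp_atBot.comp (tendsto_id.const_mul_atTop_of_neg (neg_neg_iff_pos.2 hε))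

lemma HasExpDecay.integrableOn {f : ℝ → ℝ} (hf : HasExpDecay f) (hc : Continuous f) (a : ℝ) :
    IntegrableOn f (Set.Ioi a) := by
  obtain ⟨ε, hε, hfε⟩ := hf
  exact integrable_of_isBigO_exp_neg hε hc.continuousOn hfε

lemma HasExpDecay.of_ofReal {f : ℝ → ℝ} (hf : HasExpDecay fun u => (f u : ℂ)) :
    HasExpDecay f := by
  obtain ⟨ε, hε, hfε⟩ := hf
  exact ⟨ε, hε, isBigO_norm_left.1 (by simpa using hfε.norm_left)⟩

lemma hasExpDecay_cexp_mul {μ : ℂ} (hμ : μ.re < 0) :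
    HasExpDecay fun u : ℝ => Complex.exp (u * μ) := by
  refine ⟨-μ.re, neg_pos.2 hμ, IsBigO.of_bound 1 (Eventually.of_forall fun u => ?_)⟩
  simp [Complex.norm_exp, mul_comm]

end HasExpDecay

section ComplexMatrix

variable {n : Type*} [Fintype n] [DecidableEq n]

-- `exp` of a matrix does not depend on a norm; the operator norm is only opened locally to
-- reach the Banach-algebra API of `NormedSpace.exp`.
open scoped Norms.Operator in
lemma exp_smul_mulVec_of_pow_mulVec_eq_zero {N : Matrix n n ℂ} {k : ℕ} {x : n → ℂ}
    (hx : (N ^ k) *ᵥ x = 0) (t : ℂ) :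
    exp (t • N) *ᵥ x = ∑ j ∈ Finset.range k, (t ^ j / j !) • (N ^ j *ᵥ x) := by
  have hsum := (exp_series_hasSum_exp' (𝕂 := ℂ) (t • N)).map (mulVec.addMonoidHomLeft x)
    (continuous_id.matrix_mulVec continuous_const)
  have hterm : ∀ j : ℕ, mulVec.addMonoidHomLeft x ((j ! : ℂ)⁻¹ • (t • N) ^ j)
      = (t ^ j / j !) • (N ^ j *ᵥ x) := fun j => by
    simp only [mulVec.addMonoidHomLeft, AddMonoidHom.coe_mk, ZeroHom.coe_mk, smul_pow,
      smul_mulVec, smul_smul, div_eq_inv_mul]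
  simp only [Function.comp_def, hterm] at hsum
  refine hsum.unique (hasSum_sum_of_ne_finset_zero fun j hj => ?_)
  obtain ⟨i, rfl⟩ := Nat.exists_eq_add_of_le (not_lt.1 (Finset.mem_range.not.1 hj))
  rw [add_comm, pow_add N, ← mulVec_mulVec, hx, mulVec_zero, smul_zero]

lemma exp_smul_mulVec_of_pow_sub_smul_mulVec_eq_zero (A : Matrix n n ℂ) (μ : ℂ) {k : ℕ}
    {x : n → ℂ} (hx : ((A - μ • 1) ^ k) *ᵥ x = 0) (t : ℂ) :
    exp (t • A) *ᵥ x = ∑ j ∈ Finset.range k,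
      (t ^ j * Complex.exp (t * μ)) • ((j ! : ℂ)⁻¹ • ((A - μ • 1) ^ j *ᵥ x)) := by
  have hsplit : t • A = algebraMap ℂ (Matrix n n ℂ) (t * μ) + t • (A - μ • 1) := by
    rw [Algebra.algebraMap_eq_smul_one, smul_sub, smul_smul]
    abel
  have hexp : exp (algebraMap ℂ (Matrix n n ℂ) (t * μ)) = Complex.exp (t * μ) • 1 := by
    open scoped Norms.Operator in erw [← algebraMap_exp_comm]
    rw [Complex.exp_eq_exp_ℂ, Algebra.algebraMap_eq_smul_one]
  rw [hsplit, Matrix.exp_add_of_commute _ _ (Algebra.commute_algebraMap_left _ _), hexp,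
    smul_one_mul, smul_mulVec, exp_smul_mulVec_of_pow_mulVec_eq_zero hx, Finset.smul_sum]
  refine Finset.sum_congr rfl fun j _ => ?_
  rw [smul_smul, smul_smul, div_eq_mul_inv]
  ring_nf

lemma hasExpDecay_exp_smul_mulVec_of_pow_sub_smul_mulVec_eq_zero (A : Matrix n n ℂ) {μ : ℂ}
    (hμ : μ.re < 0) {k : ℕ} {x : n → ℂ} (hx : ((A - μ • 1) ^ k) *ᵥ x = 0) :
    HasExpDecay fun u : ℝ => exp (u • A) *ᵥ x := by
  simp_rw [← Complex.coe_smul, exp_smul_mulVec_of_pow_sub_smul_mulVec_eq_zero A μ hx,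
    ← Complex.ofReal_pow, ← Complex.real_smul]
  exact hasExpDecay_sum _ fun j _ => ((hasExpDecay_cexp_mul hμ).pow_smul j).smul_const _

lemma hasExpDecay_exp_smul_mulVec (A : Matrix n n ℂ) (hA : ∀ μ ∈ spectrum ℂ A, μ.re < 0)
    (v : n → ℂ) : HasExpDecay fun u : ℝ => exp (u • A) *ᵥ v := by
  have hv : v ∈ ⨆ μ, Module.End.maxGenEigenspace (toLin' A) μ := by
    rw [Module.End.iSup_maxGenEigenspace_eq_top]
    trivial
  induction hv using Submodule.iSup_induction' with
  | mem μ x hx =>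
    obtain ⟨k, hk⟩ := (Module.End.mem_maxGenEigenspace _ _ _).1 hx
    by_cases hx0 : x = 0
    · subst hx0
      simpa using hasExpDecay_zero
    have hμ : μ ∈ spectrum ℂ A := by
      rw [← spectrum_toLin', ← Module.End.hasEigenvalue_iff_mem_spectrum]
      exact (Module.End.hasUnifEigenvalue_iff_hasUnifEigenvalue_one (k := ⊤) (by simp)).1
        ((Submodule.ne_bot_iff _).2 ⟨x, hx, hx0⟩)
    refine hasExpDecay_exp_smul_mulVec_of_pow_sub_smul_mulVec_eq_zero A (hA μ hμ) (k := k) ?_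
    rwa [← toLinAlgEquiv'_apply, map_pow, map_sub, map_smul, map_one]
  | zero => simpa using hasExpDecay_zero
  | add x y _ _ hx hy =>
    simp only [mulVec_add]
    exact hx.add hy

end ComplexMatrix

section RealMatrix

variable {n : Type*} [Fintype n] [DecidableEq n]

lemma isUnit_of_zero_notMem_spectrum_map (T : Matrix n n ℝ)
    (hT : (0 : ℂ) ∉ spectrum ℂ (T.map (algebraMap ℝ ℂ))) : IsUnit T := by
  have h := not_not.1 (mt (spectrum.zero_mem_iff ℂ).2 hT)
  rw [isUnit_iff_isUnit_det, ← RingHom.mapMatrix_apply, ← RingHom.map_det] at h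
  exact (isUnit_iff_isUnit_det _).2 ((isUnit_map_iff _ _).1 h)

open scoped Norms.Operator in
lemma exp_map_algebraMap (M : Matrix n n ℝ) :
    (exp M).map (algebraMap ℝ ℂ) = exp (M.map (algebraMap ℝ ℂ)) :=
  map_exp (algebraMap ℝ ℂ).mapMatrix (continuous_id.matrix_map (continuous_algebraMap ℝ ℂ)) M

open scoped Norms.Operator in
lemma hasDerivAt_dotProduct_exp_smul_mulVec (T : Matrix n n ℝ) (π w : n → ℝ) (u : ℝ) :
    HasDerivAt (fun u : ℝ => π ⬝ᵥ exp (u • T) *ᵥ w) (π ⬝ᵥ exp (u • T) *ᵥ (T *ᵥ w)) u := by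
  let L : Matrix n n ℝ →ₗ[ℝ] ℝ :=
    { toFun := fun M => π ⬝ᵥ M *ᵥ w
      map_add' := fun M N => by simp only [add_mulVec, dotProduct_add]
      map_smul' := fun c M => by simp only [smul_mulVec, dotProduct_smul, RingHom.id_apply] }
  exact ((LinearMap.toContinuousLinearMap L).hasFDerivAt.comp_hasDerivAt u
    (hasDerivAt_exp_smul_const T u)).congr_deriv <|
      congrArg (π ⬝ᵥ ·) (mulVec_mulVec w (exp (u • T)) T).symm

lemma continuous_dotProduct_exp_smul_mulVec (T : Matrix n n ℝ) (π w : n → ℝ) :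
    Continuous fun u : ℝ => π ⬝ᵥ exp (u • T) *ᵥ w :=
  continuous_iff_continuousAt.2 fun u =>
    (hasDerivAt_dotProduct_exp_smul_mulVec T π w u).continuousAt

lemma hasDerivAt_neg_dotProduct_exp_smul_mulVec_inv_neg {T : Matrix n n ℝ} (hT : IsUnit T)
    (π w : n → ℝ) (u : ℝ) :
    HasDerivAt (fun u : ℝ => -(π ⬝ᵥ exp (u • T) *ᵥ ((-T)⁻¹ *ᵥ w)))
      (π ⬝ᵥ exp (u • T) *ᵥ w) u := by
  have hTS : T * (-T)⁻¹ = -1 := by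
    have h := (-T).mul_nonsing_inv ((-T).isUnit_iff_isUnit_det.1 hT.neg)
    rwa [neg_mul, neg_eq_iff_eq_neg] at h
  have h := (hasDerivAt_dotProduct_exp_smul_mulVec T π ((-T)⁻¹ *ᵥ w) u).neg
  rwa [mulVec_mulVec w T, hTS, neg_mulVec, one_mulVec, mulVec_neg, dotProduct_neg, neg_neg] at h

variable {T : Matrix n n ℝ}

lemma hasExpDecay_dotProduct_exp_smul_mulVec
    (hT : ∀ μ ∈ spectrum ℂ (T.map (algebraMap ℝ ℂ)), μ.re < 0) (π w : n → ℝ) :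
    HasExpDecay fun u : ℝ => π ⬝ᵥ exp (u • T) *ᵥ w := by
  refine HasExpDecay.of_ofReal ?_
  have hcast : ∀ u : ℝ, ((π ⬝ᵥ exp (u • T) *ᵥ w : ℝ) : ℂ) =
      (fun i => (π i : ℂ)) ⬝ᵥ exp (u • T.map (algebraMap ℝ ℂ)) *ᵥ fun i => (w i : ℂ) := by
    intro u
    have hmap : (u • T).map (algebraMap ℝ ℂ) = u • T.map (algebraMap ℝ ℂ) := by
      ext
      simp [Complex.real_smul]
    rw [← Complex.coe_algebraMap, RingHom.map_dotProduct, ← hmap, ← exp_map_algebraMap]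
    congr 1
    ext i
    exact RingHom.map_mulVec _ _ _ i
  simp_rw [hcast]
  exact (hasExpDecay_exp_smul_mulVec _ hT _).dotProduct _

lemma integrableOn_pow_mul_dotProduct_exp_smul_mulVec
    (hT : ∀ μ ∈ spectrum ℂ (T.map (algebraMap ℝ ℂ)), μ.re < 0) (π w : n → ℝ) (k : ℕ) (a : ℝ) :
    IntegrableOn (fun u : ℝ => u ^ k * (π ⬝ᵥ exp (u • T) *ᵥ w)) (Set.Ioi a) :=
  ((hasExpDecay_dotProduct_exp_smul_mulVec hT π w).pow_smul k).integrableOn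
    ((continuous_pow k).mul (continuous_dotProduct_exp_smul_mulVec T π w)) a

lemma integral_dotProduct_exp_smul_mulVec
    (hT : ∀ μ ∈ spectrum ℂ (T.map (algebraMap ℝ ℂ)), μ.re < 0) (π w : n → ℝ) :
    ∫ u in Set.Ioi (0 : ℝ), π ⬝ᵥ exp (u • T) *ᵥ w = π ⬝ᵥ (-T)⁻¹ *ᵥ w := by
  have hT' := isUnit_of_zero_notMem_spectrum_map T fun h0 => by simpa using hT 0 h0
  have h := integral_Ioi_of_hasDerivAt_of_tendsto'
    (fun u _ => hasDerivAt_neg_dotProduct_exp_smul_mulVec_inv_neg hT' π w u)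
    ((hasExpDecay_dotProduct_exp_smul_mulVec hT π w).integrableOn
      (continuous_dotProduct_exp_smul_mulVec T π w) 0)
    (by simpa using (hasExpDecay_dotProduct_exp_smul_mulVec hT π ((-T)⁻¹ *ᵥ w)).tendsto_zero.neg)
  simpa using h

lemma integral_pow_succ_mul_dotProduct_exp_smul_mulVec
    (hT : ∀ μ ∈ spectrum ℂ (T.map (algebraMap ℝ ℂ)), μ.re < 0) (π w : n → ℝ) (m : ℕ) :
    ∫ u in Set.Ioi 0, u ^ (m + 1) * (π ⬝ᵥ exp (u • T) *ᵥ w) =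
      (m + 1) * ∫ u in Set.Ioi 0, u ^ m * (π ⬝ᵥ exp (u • T) *ᵥ ((-T)⁻¹ *ᵥ w)) := by
  have hT' := isUnit_of_zero_notMem_spectrum_map T fun h0 => by simpa using hT 0 h0
  refine (integral_Ioi_mul_deriv_eq_deriv_mul (a' := 0) (b' := 0)
    (u := fun u : ℝ => u ^ (m + 1)) (v := fun u => -(π ⬝ᵥ exp (u • T) *ᵥ ((-T)⁻¹ *ᵥ w)))
    (fun u _ => hasDerivAt_pow (m + 1) u)
    (fun u _ => hasDerivAt_neg_dotProduct_exp_smul_mulVec_inv_neg hT' π w u)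
    (integrableOn_pow_mul_dotProduct_exp_smul_mulVec hT π w (m + 1) 0) ?_ ?_ ?_).trans ?_
  · refine IntegrableOn.congr_fun ((integrableOn_pow_mul_dotProduct_exp_smul_mulVec hT π
      ((-T)⁻¹ *ᵥ w) m 0).const_mul (-(m + 1 : ℝ))) (fun u _ => ?_) measurableSet_Ioi
    simp only [Pi.mul_apply]
    push_cast
    ring
  · have hcont : Continuous ((fun u : ℝ => u ^ (m + 1)) *
        fun u => -(π ⬝ᵥ exp (u • T) *ᵥ ((-T)⁻¹ *ᵥ w))) :=
      (continuous_pow _).mul (continuous_dotProduct_exp_smul_mulVec T π _).neg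
    simpa using (hcont.tendsto 0).mono_left (nhdsWithin_le_nhds (s := Set.Ioi 0))
  · simpa [Pi.mul_def] using
      ((hasExpDecay_dotProduct_exp_smul_mulVec hT π ((-T)⁻¹ *ᵥ w)).pow_smul
        (m + 1)).tendsto_zero.neg
  · rw [sub_self, zero_sub, ← integral_neg, ← integral_const_mul]
    refine setIntegral_congr_fun measurableSet_Ioi fun u _ => ?_
    simp only [Nat.add_sub_cancel]
    push_cast
    ring

lemma integral_pow_mul_dotProduct_exp_smul_mulVec
    (hT : ∀ μ ∈ spectrum ℂ (T.map (algebraMap ℝ ℂ)), μ.re < 0) (π w : n → ℝ) (m : ℕ) :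
    ∫ u in Set.Ioi 0, u ^ m * (π ⬝ᵥ exp (u • T) *ᵥ w) =
      m ! * (π ⬝ᵥ ((-T)⁻¹ ^ (m + 1)) *ᵥ w) := by
  induction m generalizing w with
  | zero => simpa using integral_dotProduct_exp_smul_mulVec hT π w
  | succ m ih =>
    rw [integral_pow_succ_mul_dotProduct_exp_smul_mulVec hT, ih, mulVec_mulVec, ← pow_succ,
      Nat.factorial_succ]
    push_cast
    ring

lemma integral_moment_dotProduct_exp_smul_mulVec
    (hT : ∀ μ ∈ spectrum ℂ (T.map (algebraMap ℝ ℂ)), μ.re < 0) (π w : n → ℝ) {k : ℕ}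
    (hk : 1 ≤ k) :
    ∫ u in Set.Ioi 0, (k : ℝ) * u ^ (k - 1) * (π ⬝ᵥ exp (u • T) *ᵥ w) =
      k ! * (π ⬝ᵥ ((-T)⁻¹ ^ k) *ᵥ w) := by
  obtain ⟨m, rfl⟩ := Nat.exists_eq_add_of_le' hk
  simp_rw [Nat.add_sub_cancel, mul_assoc, integral_const_mul,
    integral_pow_mul_dotProduct_exp_smul_mulVec hT, Nat.factorial_succ]
  push_cast
  ring

end RealMatrix

lemma integral_mul_rpow_mul_comp_rpow (g : ℝ → ℝ) (a : ℝ) {θ : ℝ} (hθ : 0 < θ) :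
    ∫ y in Set.Ioi 0, a * θ * y ^ (a * θ - 1) * g (y ^ θ) =
      ∫ u in Set.Ioi 0, a * u ^ (a - 1) * g u := by
  rw [← integral_comp_rpow_Ioi (fun u => a * u ^ (a - 1) * g u) hθ.ne']
  refine setIntegral_congr_fun measurableSet_Ioi fun y (hy : 0 < y) => ?_
  have hpow : y ^ (a * θ - 1) = y ^ (θ - 1) * (y ^ θ) ^ (a - 1) := by
    rw [← Real.rpow_mul hy.le, ← Real.rpow_add hy]
    ring_nf
  simp only [smul_eq_mul, abs_of_pos hθ, hpow]
  ring

theorem stmt17_general {p : ℕ} (T : Matrix (Fin p) (Fin p) ℝ)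
    (hEig : ∀ μ ∈ spectrum ℂ (T.map (algebraMap ℝ ℂ)), μ.re < 0)
    (π : Fin p → ℝ) (θ : ℝ) (hθ : 0 < θ) :
    (∀ n : ℕ, 1 ≤ n →
      ∫ y in Set.Ioi (0:ℝ),
          ((n : ℝ) * θ) * y ^ ((n : ℝ) * θ - 1) *
            (π ⬝ᵥ (NormedSpace.exp ((y ^ θ) • T)) *ᵥ (fun _ => (1:ℝ)))
        = Real.Gamma ((n : ℝ) + 1) * (π ⬝ᵥ ((-T)⁻¹ ^ n) *ᵥ (fun _ => (1:ℝ)))) ∧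
    (∀ n : ℕ, 1 ≤ n →
      ∫ y in Set.Ioi (0:ℝ),
          (n : ℝ) * y ^ (n - 1) *
            (π ⬝ᵥ (NormedSpace.exp (y • T)) *ᵥ (fun _ => (1:ℝ)))
        = (n.factorial : ℝ) * (π ⬝ᵥ ((-T)⁻¹ ^ n) *ᵥ (fun _ => (1:ℝ)))) := by
  refine ⟨fun n hn => ?_, fun n hn => integral_moment_dotProduct_exp_smul_mulVec hEig π _ hn⟩
  rw [integral_mul_rpow_mul_comp_rpow (fun u => π ⬝ᵥ exp (u • T) *ᵥ fun _ => 1) n hθ,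
    Real.Gamma_nat_eq_factorial, ← integral_moment_dotProduct_exp_smul_mulVec hEig π _ hn]
  refine setIntegral_congr_fun measurableSet_Ioi fun y _ => ?_
  rw [← Nat.cast_pred hn, Real.rpow_natCast]

/-- Moments of the Weibull PH-MoE specification: the `nθ`-th moment equals
`Γ(n+1) πᵀ (-T)⁻ⁿ e`; in the homogeneous case `θ = 1` the `n`-th moment equals
`n! πᵀ (-T)⁻ⁿ e`. -/
theorem stmt17 {p : ℕ} (T : Matrix (Fin p) (Fin p) ℝ) (hT : IsSubIntensity T)
    (hEig : ∀ μ ∈ spectrum ℂ (T.map (algebraMap ℝ ℂ)), μ.re < 0)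
    (π : Fin p → ℝ) (hπ : IsProbVec π) (θ : ℝ) (hθ : 0 < θ) :
    (∀ n : ℕ, 1 ≤ n →
      ∫ y in Set.Ioi (0:ℝ),
          ((n : ℝ) * θ) * y ^ ((n : ℝ) * θ - 1) *
            (π ⬝ᵥ (NormedSpace.exp ((y ^ θ) • T)) *ᵥ (fun _ => (1:ℝ)))
        = Real.Gamma ((n : ℝ) + 1) * (π ⬝ᵥ ((-T)⁻¹ ^ n) *ᵥ (fun _ => (1:ℝ)))) ∧
    (∀ n : ℕ, 1 ≤ n →
      ∫ y in Set.Ioi (0:ℝ),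
          (n : ℝ) * y ^ (n - 1) *
            (π ⬝ᵥ (NormedSpace.exp (y • T)) *ᵥ (fun _ => (1:ℝ)))
        = (n.factorial : ℝ) * (π ⬝ᵥ ((-T)⁻¹ ^ n) *ᵥ (fun _ => (1:ℝ)))) :=
  stmt17_general T hEig π θ hθ
end
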